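/- arXiv:1609.06402 — 2 statements merged into one kernel-verified Lean document; each statement's English description precedes it below -/
import Mathlib

section
/- Fix t ≥ 0 and a real s with s < (a/4)·t^α, and an integer n ≥ 0 such that θ̃_n(t) := 2^{−n−2}·a·(2^n+t)^α lies in (0, δ'). Then for every integer k with 2^n ≤ k < 2^{n+1} and every real x with s + x > a·(k+t)^α + b·(k+t)^{1−α}, one has exp(−θ̃_n(t)·x + k·ψ(θ̃_n(t))) ≤ p_t(n)/4. -/
set_option maxHeartbeats 1000000

open MeasureTheory ProbabilityTheory Real

open Filter in
lemma aux_summable {α a : ℝ} (hα : 1/2 < α) (ha0 : 0 < a) :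
    Summable (fun n : ℕ => (2:ℝ)^n * Real.exp (-a^2 * (2:ℝ)^(2*(n:ℝ)*α - (n:ℝ) - 4))) := by
  set ε : ℝ := 2*α - 1 with hε_def
  have hε : 0 < ε := by rw [hε_def]; linarith
  have h2ε : (1:ℝ) < (2:ℝ)^ε := by
    rw [Real.one_lt_rpow_iff_of_pos (by norm_num : (0:ℝ) < 2)]
    exact Or.inl ⟨by norm_num, hε⟩
  have htend : Tendsto (fun n : ℕ => a^2 * (2:ℝ)^((n:ℝ)*ε - 4) * ((2:ℝ)^ε - 1))
      atTop atTop := by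
    have h1 : Tendsto (fun n : ℕ => (n:ℝ)*ε - 4) atTop atTop :=
      tendsto_atTop_add_const_right _ _ (tendsto_natCast_atTop_atTop.atTop_mul_const hε)
    have h2 : Tendsto (fun n : ℕ => (2:ℝ)^((n:ℝ)*ε - 4)) atTop atTop := by
      have : (fun n : ℕ => (2:ℝ)^((n:ℝ)*ε - 4))
          = fun n : ℕ => Real.exp (Real.log 2 * ((n:ℝ)*ε - 4)) := by
        funext n; rw [Real.rpow_def_of_pos (by norm_num : (0:ℝ) < 2)]
      rw [this]
      exact Real.tendsto_exp_atTop.comp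
        ((h1.const_mul_atTop (Real.log_pos (by norm_num))))
    exact (h2.const_mul_atTop (by positivity)).atTop_mul_const (by linarith)
  refine summable_of_ratio_norm_eventually_le (r := 1/2) (by norm_num) ?_
  filter_upwards [htend.eventually_ge_atTop (Real.log 4)] with n hn
  have hE' : 2*((n:ℝ)+1)*α - ((n:ℝ)+1) - 4 = ((n:ℝ)*ε - 4) + ε := by rw [hε_def]; ring
  have hE : 2*(n:ℝ)*α - (n:ℝ) - 4 = (n:ℝ)*ε - 4 := by rw [hε_def]; ring
  set B : ℝ := (2:ℝ)^((n:ℝ)*ε - 4) with hB_def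
  have hsplit : (2:ℝ)^(((n:ℝ)*ε - 4) + ε) = B * (2:ℝ)^ε :=
    Real.rpow_add (by norm_num) _ _
  have h4 : (4:ℝ) ≤ Real.exp (a^2 * B * ((2:ℝ)^ε - 1)) := by
    calc (4:ℝ) = Real.exp (Real.log 4) := (Real.exp_log (by norm_num)).symm
      _ ≤ _ := Real.exp_le_exp.mpr hn
  have key : 4 * Real.exp (-a^2 * (B * (2:ℝ)^ε)) ≤ Real.exp (-a^2 * B) := by
    calc 4 * Real.exp (-a^2 * (B * (2:ℝ)^ε))
        ≤ Real.exp (a^2 * B * ((2:ℝ)^ε - 1)) * Real.exp (-a^2 * (B * (2:ℝ)^ε)) :=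
          mul_le_mul_of_nonneg_right h4 (Real.exp_pos _).le
      _ = Real.exp (-a^2 * B) := by rw [← Real.exp_add]; congr 1; ring
  rw [Real.norm_eq_abs, Real.norm_eq_abs, abs_of_pos (by positivity),
    abs_of_pos (by positivity)]
  push_cast
  rw [hE', hE, hsplit, ← hB_def, pow_succ]
  calc (2:ℝ)^n * 2 * Real.exp (-a^2 * (B * (2:ℝ)^ε))
      = (2:ℝ)^n / 2 * (4 * Real.exp (-a^2 * (B * (2:ℝ)^ε))) := by ring
    _ ≤ (2:ℝ)^n / 2 * Real.exp (-a^2 * B) := by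
        exact mul_le_mul_of_nonneg_left key (by positivity)
    _ = 1/2 * ((2:ℝ)^n * Real.exp (-a^2 * B)) := by ring

/-- The key likelihood-ratio bound for Procedure B (Lemma 3): for `t ≥ 0`,
`s < (a/4) t^α`, `θ̃_n(t) = 2^{-n-2} a (2^n + t)^α ∈ (0, δ')`, `2^n ≤ k < 2^{n+1}`
and `s + x` above the boundary at `k + t`, one has
`exp(-θ̃_n(t) x + k ψ(θ̃_n(t))) ≤ p_t(n)/4`. -/
theorem procedure_B_likelihood_ratio_bound
    {Ω : Type*} [MeasurableSpace Ω] (P : Measure Ω) [IsProbabilityMeasure P]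
    (X : ℕ → Ω → ℝ) (hmeas : ∀ i, Measurable (X i))
    (hindep : iIndepFun X P)
    (hident : ∀ i, IdentDistrib (X i) (X 0) P P)
    (hmean : ∫ ω, X 0 ω ∂P = 0)
    (δ : ℝ) (hδ : 0 < δ)
    (hmgf : ∀ θ : ℝ, |θ| < δ → Integrable (fun ω => exp (θ * X 0 ω)) P)
    (ψ : ℝ → ℝ) (hψdef : ∀ θ : ℝ, |θ| < δ → ψ θ = Real.log (∫ ω, exp (θ * X 0 ω) ∂P))
    (δ' : ℝ) (hδ'pos : 0 < δ') (hδ'le : δ' ≤ δ)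
    (hψ : ∀ θ : ℝ, |θ| < δ' → ψ θ ≤ θ ^ 2)
    (α a b : ℝ) (hα : 1/2 < α) (hα1 : α < 1)
    (ha0 : 0 < a) (ha : a < min (4 * δ') (1/2))
    (hb : b = (4 / a) *
      Real.log (4 * ∑' n : ℕ, (2:ℝ)^n * exp (-a^2 * (2:ℝ)^(2*(n:ℝ)*α - (n:ℝ) - 4))))
    (pt : ℝ → ℕ → ℝ)
    (hpt : ∀ (t : ℝ) (n : ℕ), pt t n =
      (2:ℝ)^n * exp (-(2:ℝ)^(-(n:ℝ)-4) * a^2 * ((2:ℝ)^n + t)^(2*α)) /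
      ∑' m : ℕ, (2:ℝ)^m * exp (-(2:ℝ)^(-(m:ℝ)-4) * a^2 * ((2:ℝ)^m + t)^(2*α))) :
    ∀ (t : ℝ), 0 ≤ t → ∀ (s : ℝ), s < a/4 * t^α → ∀ n : ℕ,
      0 < (2:ℝ)^(-(n:ℝ)-2) * a * ((2:ℝ)^n + t)^α →
      (2:ℝ)^(-(n:ℝ)-2) * a * ((2:ℝ)^n + t)^α < δ' →
      ∀ k : ℕ, 2^n ≤ k → k < 2^(n+1) →
        ∀ x : ℝ, a * ((k:ℝ) + t)^α + b * ((k:ℝ) + t)^(1-α) < s + x →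
          exp (-((2:ℝ)^(-(n:ℝ)-2) * a * ((2:ℝ)^n + t)^α) * x
              + (k:ℝ) * ψ ((2:ℝ)^(-(n:ℝ)-2) * a * ((2:ℝ)^n + t)^α)) ≤ pt t n / 4 := by
  intro t ht s hs n hθpos hθlt k hk1 hk2 x hx
  have hptn := hpt t n
  have h2npos : (0:ℝ) < (2:ℝ)^n := by positivity
  set u : ℝ := (2:ℝ)^n + t with hu_def
  have hu : 0 < u := by positivity
  set θ : ℝ := (2:ℝ)^(-(n:ℝ)-2) * a * u^α with hθ_def
  have hψθ : ψ θ ≤ θ^2 := hψ θ (by rw [abs_of_pos hθpos]; exact hθlt)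
  -- sums
  set S : ℝ := ∑' m : ℕ, (2:ℝ)^m * exp (-a^2 * (2:ℝ)^(2*(m:ℝ)*α - (m:ℝ) - 4)) with hS_def
  set St : ℝ := ∑' m : ℕ, (2:ℝ)^m * exp (-(2:ℝ)^(-(m:ℝ)-4) * a^2 * ((2:ℝ)^m + t)^(2*α))
    with hSt_def
  clear_value S St
  have hgsum : Summable (fun m : ℕ => (2:ℝ)^m * exp (-a^2 * (2:ℝ)^(2*(m:ℝ)*α - (m:ℝ) - 4))) :=
    aux_summable hα ha0
  have hterm : ∀ m : ℕ, (2:ℝ)^m * exp (-(2:ℝ)^(-(m:ℝ)-4) * a^2 * ((2:ℝ)^m + t)^(2*α))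
      ≤ (2:ℝ)^m * exp (-a^2 * (2:ℝ)^(2*(m:ℝ)*α - (m:ℝ) - 4)) := by
    intro m
    have h1 : (2:ℝ)^(2*(m:ℝ)*α - (m:ℝ) - 4)
        = (2:ℝ)^(-(m:ℝ)-4) * ((2:ℝ)^m)^(2*α) := by
      rw [← Real.rpow_natCast 2 m, ← Real.rpow_mul (by norm_num : (0:ℝ) ≤ 2),
        ← Real.rpow_add (by norm_num : (0:ℝ) < 2)]
      congr 1; ring
    have h2 : ((2:ℝ)^m : ℝ)^(2*α) ≤ ((2:ℝ)^m + t)^(2*α) :=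
      Real.rpow_le_rpow (by positivity) (by linarith) (by linarith)
    have h3 : -(2:ℝ)^(-(m:ℝ)-4) * a^2 * ((2:ℝ)^m + t)^(2*α)
        ≤ -a^2 * (2:ℝ)^(2*(m:ℝ)*α - (m:ℝ) - 4) := by
      rw [h1]
      have h4 : (0:ℝ) < (2:ℝ)^(-(m:ℝ)-4) := by positivity
      nlinarith [mul_le_mul_of_nonneg_left h2 (mul_nonneg (sq_nonneg a) h4.le)]
    exact mul_le_mul_of_nonneg_left (Real.exp_le_exp.mpr h3) (by positivity)
  have hStsum : Summable
      (fun m : ℕ => (2:ℝ)^m * exp (-(2:ℝ)^(-(m:ℝ)-4) * a^2 * ((2:ℝ)^m + t)^(2*α))) :=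
    Summable.of_nonneg_of_le (fun m => by positivity) hterm hgsum
  have hSpos : 0 < S := by
    rw [hS_def]; exact Summable.tsum_pos hgsum (fun m => by positivity) 0 (by positivity)
  have hStpos : 0 < St := by
    rw [hSt_def]; exact Summable.tsum_pos hStsum (fun m => by positivity) 0 (by positivity)
  have hStS : St ≤ S := by
    rw [hS_def, hSt_def]; exact Summable.tsum_le_tsum hterm hStsum hgsum
  -- b > 0
  have ha12 : a < 1/2 := lt_of_lt_of_le ha (min_le_right _ _)
  have hS14 : (1:ℝ)/4 < S := by
    have hle : (2:ℝ)^(0:ℕ) * exp (-a^2 * (2:ℝ)^(2*((0:ℕ):ℝ)*α - ((0:ℕ):ℝ) - 4))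
        ≤ ∑' m : ℕ, (2:ℝ)^m * exp (-a^2 * (2:ℝ)^(2*(m:ℝ)*α - (m:ℝ) - 4)) :=
      Summable.le_tsum hgsum 0 (fun j _ => by positivity)
    rw [← hS_def] at hle
    have he : (2:ℝ)^(2*((0:ℕ):ℝ)*α - ((0:ℕ):ℝ) - 4) = 1/16 := by
      rw [show 2*((0:ℕ):ℝ)*α - ((0:ℕ):ℝ) - 4 = ((-4:ℤ):ℝ) by push_cast; ring,
        Real.rpow_intCast]
      norm_num
    rw [he] at hle
    have hexp : 1 - a^2 * (1/16) ≤ exp (-a^2 * (1/16)) := by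
      have := Real.add_one_le_exp (-a^2 * (1/16)); linarith
    have ha2 : a^2 < 1/4 := by nlinarith
    simp only [pow_zero, one_mul] at hle
    linarith [hle, hexp, ha2]
  have h4S : (1:ℝ) < 4 * S := by linarith
  have hbpos : 0 < b := by
    rw [hb]; exact mul_pos (by positivity) (Real.log_pos h4S)
  have habS : Real.exp (a * b / 4) = 4 * S := by
    have : a * b / 4 = Real.log (4 * S) := by
      rw [hb]; field_simp
    rw [this, Real.exp_log (by linarith)]
  -- power identities
  have rpow2_mul : ∀ p q : ℝ, (2:ℝ)^p * (2:ℝ)^q = (2:ℝ)^(p+q) :=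
    fun p q => (Real.rpow_add (by norm_num) p q).symm
  have hu_mul : ∀ p q : ℝ, u^p * u^q = u^(p+q) := fun p q => (Real.rpow_add hu p q).symm
  have h2nat : ((2:ℝ)^n : ℝ) = (2:ℝ)^((n:ℝ)) := (Real.rpow_natCast 2 n).symm
  set C : ℝ := (2:ℝ)^(-(n:ℝ)-4) * a^2 * u^(2*α) with hC_def
  clear_value C
  have hCpos : 0 < C := by rw [hC_def]; positivity
  have hid1 : (2:ℝ)^((n:ℝ)+1) * θ^2 = 2 * C := by
    have e1 : (2:ℝ)^((n:ℝ)+1) * ((2:ℝ)^(-(n:ℝ)-2) * (2:ℝ)^(-(n:ℝ)-2))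
        = 2 * (2:ℝ)^(-(n:ℝ)-4) := by
      rw [rpow2_mul, rpow2_mul, show ((n:ℝ)+1) + ((-(n:ℝ)-2) + (-(n:ℝ)-2))
        = 1 + (-(n:ℝ)-4) by ring, ← rpow2_mul, Real.rpow_one]
    have e2 : u^α * u^α = u^(2*α) := by rw [hu_mul, show α + α = 2*α by ring]
    calc (2:ℝ)^((n:ℝ)+1) * θ^2
        = ((2:ℝ)^((n:ℝ)+1) * ((2:ℝ)^(-(n:ℝ)-2) * (2:ℝ)^(-(n:ℝ)-2))) * a^2 * (u^α * u^α) := by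
          rw [hθ_def]; ring
      _ = 2 * C := by rw [e1, e2, hC_def]; ring
  have h2sq : (2:ℝ)^(-(n:ℝ)-2) = 4 * (2:ℝ)^(-(n:ℝ)-4) := by
    rw [show -(n:ℝ)-2 = 2 + (-(n:ℝ)-4) by ring, ← rpow2_mul,
      show (2:ℝ)^(2:ℝ) = 4 by
        rw [show (2:ℝ) = ((2:ℕ):ℝ) by norm_num, Real.rpow_natCast]; norm_num]
  have hid2 : θ * (3*a/4 * u^α) = 3 * C := by
    have e2 : u^α * u^α = u^(2*α) := by rw [hu_mul, show α + α = 2*α by ring]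
    calc θ * (3*a/4 * u^α) = (2:ℝ)^(-(n:ℝ)-2) * (3/4) * a^2 * (u^α * u^α) := by
          rw [hθ_def]; ring
      _ = 3 * C := by rw [e2, h2sq, hC_def]; ring
  have hid3 : θ * (b * u^(1-α)) = (2:ℝ)^(-(n:ℝ)-2) * (a*b) * u := by
    calc θ * (b * u^(1-α)) = (2:ℝ)^(-(n:ℝ)-2) * (a*b) * (u^α * u^(1-α)) := by
          rw [hθ_def]; ring
      _ = _ := by rw [hu_mul, show α + (1-α) = 1 by ring, Real.rpow_one]
  have hab4 : a*b/4 ≤ (2:ℝ)^(-(n:ℝ)-2) * (a*b) * u := by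
    have h1 : (2:ℝ)^(-(n:ℝ)-2) * (a*b) * (2:ℝ)^((n:ℝ)) ≤ (2:ℝ)^(-(n:ℝ)-2) * (a*b) * u := by
      apply mul_le_mul_of_nonneg_left _ (by positivity)
      rw [← h2nat, hu_def]; linarith
    have h2 : (2:ℝ)^(-(n:ℝ)-2) * (a*b) * (2:ℝ)^((n:ℝ)) = a*b/4 := by
      rw [show (2:ℝ)^(-(n:ℝ)-2) * (a*b) * (2:ℝ)^((n:ℝ))
        = ((2:ℝ)^(-(n:ℝ)-2) * (2:ℝ)^((n:ℝ))) * (a*b) by ring, rpow2_mul,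
        show -(n:ℝ)-2 + (n:ℝ) = -2 by ring,
        show ((-2:ℝ)) = ((-2:ℤ):ℝ) by norm_num, Real.rpow_intCast]
      norm_num; ring
    calc a*b/4 = (2:ℝ)^(-(n:ℝ)-2) * (a*b) * (2:ℝ)^((n:ℝ)) := h2.symm
      _ ≤ _ := h1
  -- x lower bound
  have hk1' : (2:ℝ)^n ≤ (k:ℝ) := by exact_mod_cast hk1
  have hku : u ≤ (k:ℝ) + t := by rw [hu_def]; linarith
  have hmono1 : u^α ≤ ((k:ℝ)+t)^α := Real.rpow_le_rpow hu.le hku (by linarith)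
  have hmono2 : u^(1-α) ≤ ((k:ℝ)+t)^(1-α) := Real.rpow_le_rpow hu.le hku (by linarith)
  have htu : t^α ≤ u^α := Real.rpow_le_rpow ht (by rw [hu_def]; linarith) (by linarith)
  have hxlow : 3*a/4 * u^α + b * u^(1-α) < x := by
    have p1 : a * u^α ≤ a * ((k:ℝ)+t)^α := mul_le_mul_of_nonneg_left hmono1 ha0.le
    have p2 : b * u^(1-α) ≤ b * ((k:ℝ)+t)^(1-α) := mul_le_mul_of_nonneg_left hmono2 hbpos.le
    have p3 : a/4 * t^α ≤ a/4 * u^α := mul_le_mul_of_nonneg_left htu (by linarith)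
    linarith
  have hθx : θ * (3*a/4 * u^α + b * u^(1-α)) ≤ θ * x :=
    mul_le_mul_of_nonneg_left hxlow.le hθpos.le
  have hθx' : 3*C + a*b/4 ≤ θ * x := by
    have : θ * (3*a/4 * u^α + b * u^(1-α)) = 3*C + (2:ℝ)^(-(n:ℝ)-2) * (a*b) * u := by
      rw [mul_add, hid2, hid3]
    linarith [this ▸ hθx]
  -- kψ bound
  have hk2' : (k:ℝ) ≤ (2:ℝ)^((n:ℝ)+1) := by
    have : (k:ℝ) ≤ ((2^(n+1) : ℕ) : ℝ) := by exact_mod_cast hk2.le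
    have h : ((2^(n+1) : ℕ) : ℝ) = (2:ℝ)^((n:ℝ)+1) := by
      push_cast
      rw [← Real.rpow_natCast 2 (n+1)]; push_cast; ring_nf
    linarith [h ▸ this]
  have hkψ : (k:ℝ) * ψ θ ≤ 2*C := by
    calc (k:ℝ) * ψ θ ≤ (k:ℝ) * θ^2 :=
          mul_le_mul_of_nonneg_left hψθ (Nat.cast_nonneg k)
      _ ≤ (2:ℝ)^((n:ℝ)+1) * θ^2 := mul_le_mul_of_nonneg_right hk2' (sq_nonneg θ)
      _ = 2*C := hid1
  have hexp_le : -θ*x + (k:ℝ)*ψ θ ≤ -C - a*b/4 := by linarith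
  -- conclude
  rw [hptn]
  have hCexp : -(2:ℝ)^(-(n:ℝ)-4) * a^2 * u^(2*α) = -C := by rw [hC_def]; ring
  rw [hCexp]
  calc exp (-θ*x + (k:ℝ)*ψ θ) ≤ exp (-C - a*b/4) := Real.exp_le_exp.mpr hexp_le
    _ = exp (-C) * (4*S)⁻¹ := by
        rw [show -C - a*b/4 = -C + -(a*b/4) by ring, Real.exp_add]
        congr 1
        rw [Real.exp_neg, habS]
    _ ≤ exp (-C) * (4*St)⁻¹ := by
        have h1 : (4*S)⁻¹ ≤ (4*St)⁻¹ := by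
          apply inv_anti₀ (by positivity)
          linarith
        exact mul_le_mul_of_nonneg_left h1 (Real.exp_pos _).le
    _ ≤ (2:ℝ)^n * exp (-C) * (4*St)⁻¹ := by
        have h2n1 : (1:ℝ) ≤ (2:ℝ)^n := one_le_pow₀ (by norm_num : (1:ℝ) ≤ 2)
        apply mul_le_mul_of_nonneg_right _ (by positivity)
        exact le_mul_of_one_le_left (Real.exp_pos _).le h2n1
    _ = (2:ℝ)^n * exp (-C) / St / 4 := by
        field_simp
end

section
/- If (X_i)_{i≥1} are i.i.d. real random variables with mean μ and finite moment generating function in a neighborhood of the origin, A_n := X_1 + ⋯ + X_n, and α > 1/2, then Σ_{n=1}^∞ P(|A_n − nμ| > n^α) < ∞. -/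
open MeasureTheory ProbabilityTheory Real

lemma aux_exp_bound (u : ℝ) : exp u ≤ 1 + u + 3 * u^2 * exp |u| := by
  rcases le_or_gt |u| 1 with h | h
  · have h1 := Real.abs_exp_sub_one_sub_id_le h
    have h2 : (1:ℝ) ≤ exp |u| := Real.one_le_exp (abs_nonneg u)
    have h3 := abs_le.1 h1
    nlinarith [sq_nonneg u]
  · have h1 : exp u ≤ exp |u| := Real.exp_le_exp.2 (le_abs_self u)
    have h2 : (1:ℝ) ≤ exp |u| := Real.one_le_exp (abs_nonneg u)
    have h3 : -u ≤ exp |u| :=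
      le_trans (neg_le_abs u) (by linarith [Real.add_one_le_exp |u|, abs_nonneg u])
    nlinarith [sq_nonneg u,
      mul_lt_mul_of_pos_right ((one_lt_sq_iff_one_lt_abs u).2 h) (Real.exp_pos |u|)]

lemma aux_summable_s15 {c β : ℝ} (hc : 0 < c) (hβ : 0 < β) :
    Summable (fun n : ℕ => exp (-(c * ((n:ℝ)+1)^β))) := by
  have hlog := (isLittleO_log_rpow_atTop hβ).def (by positivity : (0:ℝ) < c/2)
  have hev : ∀ᶠ x : ℝ in Filter.atTop, exp (-(c * x^β)) ≤ (x^(2:ℝ))⁻¹ := by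
    filter_upwards [hlog, Filter.eventually_ge_atTop (1:ℝ)] with x hx hx1
    have hx0 : (0:ℝ) < x := lt_of_lt_of_le one_pos hx1
    have hlogx : (0:ℝ) ≤ Real.log x := Real.log_nonneg hx1
    rw [Real.norm_eq_abs, Real.norm_eq_abs, abs_of_nonneg hlogx,
      abs_of_nonneg (Real.rpow_nonneg hx0.le β)] at hx
    have : exp (-(c * x^β)) ≤ exp (-(2 * Real.log x)) := exp_le_exp.2 (by linarith)
    refine this.trans (le_of_eq ?_)
    rw [← Real.log_rpow hx0, Real.exp_neg, Real.exp_log (by positivity)]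
  have htend : Filter.Tendsto (fun n : ℕ => (n:ℝ)+1) Filter.atTop Filter.atTop :=
    Filter.tendsto_atTop_add_const_right _ 1 tendsto_natCast_atTop_atTop
  have hevn : ∀ᶠ n : ℕ in Filter.atTop,
      ‖exp (-(c * ((n:ℝ)+1)^β))‖ ≤ 1 * ‖(((n:ℝ)+1)^(2:ℝ))⁻¹‖ := by
    filter_upwards [htend.eventually hev] with n hn
    rw [one_mul, Real.norm_eq_abs, Real.norm_eq_abs, abs_of_pos (exp_pos _),
      abs_of_nonneg (by positivity)]
    exact hn
  have hsum : Summable (fun n : ℕ => (((n:ℝ)+1)^(2:ℝ))⁻¹) := by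
    have h1 : Summable (fun n : ℕ => (((n:ℝ))^(2:ℝ))⁻¹) :=
      (Real.summable_nat_rpow_inv).2 one_lt_two
    refine ((summable_nat_add_iff 1).2 h1).congr fun n => ?_
    push_cast
    ring_nf
  exact summable_of_isBigO_nat hsum (Asymptotics.IsBigO.of_bound 1 hevn)

lemma aux_mgf_bound {Ω : Type*} [MeasurableSpace Ω] (P : Measure Ω) [IsProbabilityMeasure P]
    (Y : Ω → ℝ) (hm : Measurable Y) (μ : ℝ) (hmean : ∫ ω, Y ω ∂P = μ)
    (δ : ℝ) (hδ : 0 < δ) (hmgf : ∀ θ : ℝ, |θ| < δ → Integrable (fun ω => exp (θ * Y ω)) P) :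
    ∃ C : ℝ, 0 < C ∧ ∀ t : ℝ, |t| ≤ δ/2 → mgf Y P t ≤ exp (t*μ + C*t^2) := by
  have hexpabs : ∀ (c : ℝ) (y : ℝ), exp (c*|y|) ≤ exp (c*y) + exp (-(c*y)) := by
    intro c y
    rcases abs_cases y with ⟨h, _⟩ | ⟨h, _⟩ <;> rw [h]
    · nlinarith [Real.exp_pos (-(c*y))]
    · rw [mul_neg]; nlinarith [Real.exp_pos (c*y)]
  have hintc : ∀ c : ℝ, |c| < δ → Integrable (fun ω => exp (c*Y ω) + exp (-(c*Y ω))) P := by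
    intro c hc
    refine (hmgf c hc).add ?_
    simpa [neg_mul] using hmgf (-c) (by rwa [abs_neg])
  have hintY2 : Integrable (fun ω => (Y ω)^2 * exp ((δ/2) * |Y ω|)) P := by
    refine Integrable.mono' (((hintc (3*δ/4) (by rw [abs_of_pos (by linarith)]; linarith)).const_mul
      (64/δ^2))) ?_ (ae_of_all _ fun ω => ?_)
    · exact ((hm.pow_const 2).mul (((hm.abs.const_mul _)).exp)).aestronglyMeasurable
    · have h8 : (δ/8)*|Y ω| ≤ exp ((δ/8)*|Y ω|) := by
        nlinarith [Real.add_one_le_exp ((δ/8)*|Y ω|)]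
      have hsq : (δ/8*|Y ω|)^2 ≤ exp ((δ/4)*|Y ω|) := by
        have h : exp ((δ/4)*|Y ω|) = exp ((δ/8)*|Y ω|) * exp ((δ/8)*|Y ω|) := by
          rw [← Real.exp_add]; ring_nf
        rw [h]
        have h0 : (0:ℝ) ≤ (δ/8)*|Y ω| := by positivity
        nlinarith
      have hy2 : (Y ω)^2 ≤ (64/δ^2) * exp ((δ/4)*|Y ω|) := by
        rw [div_mul_eq_mul_div, le_div_iff₀ (by positivity)]
        nlinarith [sq_abs (Y ω)]
      have hkey : (Y ω)^2 * exp ((δ/2)*|Y ω|) ≤ (64/δ^2) * exp ((3*δ/4)*|Y ω|) := by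
        have h : exp ((δ/4)*|Y ω|) * exp ((δ/2)*|Y ω|) = exp ((3*δ/4)*|Y ω|) := by
          rw [← Real.exp_add]; ring_nf
        calc (Y ω)^2 * exp ((δ/2)*|Y ω|)
            ≤ ((64/δ^2) * exp ((δ/4)*|Y ω|)) * exp ((δ/2)*|Y ω|) :=
              mul_le_mul_of_nonneg_right hy2 (Real.exp_pos _).le
          _ = (64/δ^2) * exp ((3*δ/4)*|Y ω|) := by rw [mul_assoc, h]
      rw [Real.norm_eq_abs, abs_of_nonneg (by positivity)]
      refine hkey.trans ?_
      exact mul_le_mul_of_nonneg_left (hexpabs _ _) (by positivity)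
  have hintY : Integrable Y P := by
    refine Integrable.mono' ((hintc (δ/2) (by rw [abs_of_pos (by linarith)]; linarith)).const_mul
      (2/δ)) hm.aestronglyMeasurable (ae_of_all _ fun ω => ?_)
    have h1 : (δ/2)*|Y ω| ≤ exp ((δ/2)*|Y ω|) := by
      nlinarith [Real.add_one_le_exp ((δ/2)*|Y ω|)]
    have h2 := hexpabs (δ/2) (Y ω)
    rw [Real.norm_eq_abs]
    rw [div_mul_eq_mul_div, le_div_iff₀ (by positivity)]
    nlinarith
  set M := ∫ ω, (Y ω)^2 * exp ((δ/2) * |Y ω|) ∂P with hM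
  have hM0 : 0 ≤ M := integral_nonneg fun ω => by positivity
  refine ⟨3*M + 1, by linarith, fun t ht => ?_⟩
  have htδ : |t| < δ := lt_of_le_of_lt ht (by linarith)
  have hstep : mgf Y P t ≤ 1 + t*μ + (3*t^2)*M := by
    have hintmgf := hmgf t htδ
    have hrhs : Integrable (fun ω => 1 + t * Y ω + (3*t^2) * ((Y ω)^2 * exp ((δ/2) * |Y ω|))) P :=
      ((integrable_const 1).add (hintY.const_mul t)).add (hintY2.const_mul (3*t^2))
    have hpt : ∀ ω, exp (t * Y ω) ≤ 1 + t * Y ω + (3*t^2) * ((Y ω)^2 * exp ((δ/2) * |Y ω|)) := by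
      intro ω
      have h1 := aux_exp_bound (t * Y ω)
      have h2 : exp (|t * Y ω|) ≤ exp ((δ/2) * |Y ω|) := by
        rw [abs_mul]
        exact Real.exp_le_exp.2 (mul_le_mul_of_nonneg_right ht (abs_nonneg _))
      calc exp (t * Y ω) ≤ 1 + t * Y ω + 3 * (t * Y ω)^2 * exp |t * Y ω| := h1
        _ ≤ 1 + t * Y ω + (3*t^2) * ((Y ω)^2 * exp ((δ/2) * |Y ω|)) := by
            nlinarith [sq_nonneg (t * Y ω), mul_pow t (Y ω) 2, sq_nonneg t, sq_nonneg (Y ω)]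
    have hmono := integral_mono hintmgf hrhs hpt
    rw [mgf]
    refine hmono.trans (le_of_eq ?_)
    have i1 : Integrable (fun ω => 1 + t * Y ω) P := (integrable_const 1).add (hintY.const_mul t)
    have i2 : Integrable (fun ω => (3*t^2) * ((Y ω)^2 * exp ((δ/2) * |Y ω|))) P :=
      hintY2.const_mul (3*t^2)
    have ic : Integrable (fun _ : Ω => (1:ℝ)) P := integrable_const 1
    have imY : Integrable (fun ω => t * Y ω) P := hintY.const_mul t
    rw [integral_add i1 i2, integral_add ic imY, integral_const, integral_const_mul,
      integral_const_mul, hmean]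
    simp [hM]
  refine hstep.trans ?_
  have hle := Real.add_one_le_exp (t*μ + (3*M+1)*t^2)
  nlinarith [sq_nonneg t]

/-- Moderate-deviations summability (Lemma 5): if `(X_i)` are i.i.d. with mean `μ`
and finite mgf near the origin, `A_n = X_1 + ⋯ + X_n`, and `α > 1/2`, then
`Σ_{n ≥ 1} P(|A_n - nμ| > n^α) < ∞`. -/
theorem arrival_process_deviation_summable
    {Ω : Type*} [MeasurableSpace Ω] (P : Measure Ω) [IsProbabilityMeasure P]
    (X : ℕ → Ω → ℝ) (hmeas : ∀ i, Measurable (X i))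
    (hindep : iIndepFun X P)
    (hident : ∀ i, IdentDistrib (X i) (X 0) P P)
    (μ : ℝ) (hmean : ∫ ω, X 0 ω ∂P = μ)
    (δ : ℝ) (hδ : 0 < δ)
    (hmgf : ∀ θ : ℝ, |θ| < δ → Integrable (fun ω => exp (θ * X 0 ω)) P)
    (α : ℝ) (hα : 1/2 < α)
    (A : ℕ → Ω → ℝ) (hA : ∀ n ω, A n ω = ∑ i ∈ Finset.range n, X i ω) :
    ∑' n : ℕ, P {ω | |A (n+1) ω - ((n:ℝ)+1) * μ| > ((n:ℝ)+1)^α} < ⊤ := by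
  classical
  obtain ⟨C, hC, hbound⟩ := aux_mgf_bound P (X 0) (hmeas 0) μ hmean δ hδ hmgf
  set β : ℝ := min α (2*α - 1) with hβdef
  have hβ : 0 < β := lt_min (by linarith) (by linarith)
  set c' : ℝ := min (1/(4*C)) (δ/4) with hc'def
  have hc' : 0 < c' := lt_min (by positivity) (by linarith)
  have hc'1 : c' ≤ 1/(4*C) := min_le_left _ _
  have hc'2 : c' ≤ δ/4 := min_le_right _ _
  have hβ1 : β ≤ α := min_le_left _ _
  have hβ2 : β ≤ 2*α - 1 := min_le_right _ _
  clear_value β c'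
  have hint_i : ∀ s : ℝ, |s| < δ → ∀ i, Integrable (fun ω => exp (s * X i ω)) P := by
    intro s hs i
    have hid : IdentDistrib (fun ω => exp (s * X i ω)) (fun ω => exp (s * X 0 ω)) P P :=
      (hident i).comp (measurable_exp.comp (measurable_const_mul s))
    exact hid.integrable_iff.2 (hmgf s hs)
  have hmgf_id : ∀ (i : ℕ) (s : ℝ), mgf (X i) P s = mgf (X 0) P s := fun i s =>
    ((hident i).comp (measurable_exp.comp (measurable_const_mul s))).integral_eq
  have hkey : ∀ n : ℕ, P {ω | |A (n+1) ω - ((n:ℝ)+1) * μ| > ((n:ℝ)+1)^α}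
      ≤ ENNReal.ofReal (2 * exp (-(c' * ((n:ℝ)+1)^β))) := by
    intro n
    set m : ℕ := n + 1 with hmdef
    set R : ℝ := (n:ℝ) + 1 with hRdef
    have hmR : (m:ℝ) = R := by rw [hmdef, hRdef]; push_cast; ring
    have hR1 : (1:ℝ) ≤ R := by rw [hRdef]; have := Nat.cast_nonneg (α := ℝ) n; linarith
    have hR0 : (0:ℝ) < R := by linarith
    set t : ℝ := min (R^(α-1)/(2*C)) (δ/2) with htdef
    have hRa : 0 < R^(α-1) := Real.rpow_pos_of_pos hR0 _
    clear_value m R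
    have ht0 : 0 < t := lt_min (by positivity) (by linarith)
    have htle : t ≤ R^(α-1)/(2*C) := min_le_left _ _
    have htδ2 : t ≤ δ/2 := min_le_right _ _
    have htabs : |t| ≤ δ/2 := by rw [abs_of_pos ht0]; exact htδ2
    have htabs' : |(-t)| ≤ δ/2 := by rwa [abs_neg]
    have htδ : |t| < δ := lt_of_le_of_lt htabs (by linarith)
    have htδ' : |(-t)| < δ := by rwa [abs_neg]
    clear_value t
    have hintsum : ∀ s : ℝ, |s| < δ →
        Integrable (fun ω => exp (s * (∑ i ∈ Finset.range m, X i) ω)) P :=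
      fun s hs => hindep.integrable_exp_mul_sum hmeas (fun i _ => hint_i s hs i)
    have hmgfsum : ∀ s : ℝ, mgf (∑ i ∈ Finset.range m, X i) P s = (mgf (X 0) P s)^m := by
      intro s
      rw [hindep.mgf_sum hmeas]
      rw [Finset.prod_congr rfl (fun i _ => hmgf_id i s), Finset.prod_const, Finset.card_range]
    -- exponent estimates
    have hRsplit : R^α = R * R^(α-1) := by
      rw [show α = 1 + (α-1) by ring, Real.rpow_add hR0, Real.rpow_one]
      ring_nf
    have hCRt : C * R * t^2 ≤ t * R^α / 2 := by
      have h := mul_le_mul_of_nonneg_left htle (show (0:ℝ) ≤ C*R*t by positivity)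
      have heq : C*R*t * (R^(α-1)/(2*C)) = R * R^(α-1) * t / 2 := by
        field_simp
      calc C * R * t^2 = C*R*t * t := by ring
        _ ≤ C*R*t * (R^(α-1)/(2*C)) := h
        _ = R * R^(α-1) * t / 2 := heq
        _ = t * R^α / 2 := by rw [hRsplit]; ring
    have htail : c' * R^β ≤ t * R^α / 2 := by
      rcases le_total (R^(α-1)/(2*C)) (δ/2) with hc | hc
      · have htval : t = R^(α-1)/(2*C) := htdef.trans (min_eq_left hc)
        have hprod : R^(α-1) * R^α = R^(2*α-1) := by
          rw [← Real.rpow_add hR0]; ring_nf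
        have hβle : R^β ≤ R^(2*α-1) :=
          Real.rpow_le_rpow_of_exponent_le hR1 hβ2
        have hcle : c' ≤ 1/(4*C) := hc'1
        have hRβ0 : (0:ℝ) < R^β := Real.rpow_pos_of_pos hR0 _
        have h1 : c' * R^β ≤ (1/(4*C)) * R^(2*α-1) := by
          exact mul_le_mul hcle hβle hRβ0.le (by positivity)
        have h2 : (1/(4*C)) * R^(2*α-1) = t * R^α / 2 := by
          rw [htval, ← hprod]
          field_simp
          ring
        linarith
      · have htval : t = δ/2 := htdef.trans (min_eq_right hc)
        have hβle : R^β ≤ R^α :=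
          Real.rpow_le_rpow_of_exponent_le hR1 hβ1
        have hcle : c' ≤ δ/4 := hc'2
        have hRβ0 : (0:ℝ) < R^β := Real.rpow_pos_of_pos hR0 _
        have h1 : c' * R^β ≤ (δ/4) * R^α :=
          mul_le_mul hcle hβle hRβ0.le (by linarith)
        rw [htval]
        linarith
    have hEle : -t * R^α + C*R*t^2 ≤ -(c' * R^β) := by linarith [hCRt, htail]
    -- Chernoff, upper tail
    have hub := measure_ge_le_exp_mul_mgf (μ := P) (X := ∑ i ∈ Finset.range m, X i)
      (R*μ + R^α) ht0.le (hintsum t htδ)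
    have hub2 : (P {ω | R*μ + R^α ≤ (∑ i ∈ Finset.range m, X i) ω}).toReal
        ≤ exp (-(c' * R^β)) := by
      refine hub.trans ?_
      rw [hmgfsum t]
      have hpow : (mgf (X 0) P t)^m ≤ (exp (t*μ + C*t^2))^m :=
        pow_le_pow_left₀ mgf_nonneg (hbound t htabs) m
      calc exp (-t * (R*μ + R^α)) * (mgf (X 0) P t)^m
          ≤ exp (-t * (R*μ + R^α)) * (exp (t*μ + C*t^2))^m :=
            mul_le_mul_of_nonneg_left hpow (exp_pos _).le
        _ = exp (-t * (R*μ + R^α) + (m:ℝ) * (t*μ + C*t^2)) := by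
            rw [← Real.exp_nat_mul, ← Real.exp_add]
        _ ≤ exp (-(c' * R^β)) := by
            rw [hmR]
            exact exp_le_exp.2 (by linarith [hEle])
    -- Chernoff, lower tail
    have hlb := measure_le_le_exp_mul_mgf (μ := P) (X := ∑ i ∈ Finset.range m, X i)
      (R*μ - R^α) (neg_nonpos.2 ht0.le) (hintsum (-t) htδ')
    have hlb2 : (P {ω | (∑ i ∈ Finset.range m, X i) ω ≤ R*μ - R^α}).toReal
        ≤ exp (-(c' * R^β)) := by
      refine hlb.trans ?_
      rw [hmgfsum (-t)]
      have hpow : (mgf (X 0) P (-t))^m ≤ (exp ((-t)*μ + C*(-t)^2))^m :=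
        pow_le_pow_left₀ mgf_nonneg (hbound (-t) htabs') m
      calc exp (-(-t) * (R*μ - R^α)) * (mgf (X 0) P (-t))^m
          ≤ exp (-(-t) * (R*μ - R^α)) * (exp ((-t)*μ + C*(-t)^2))^m :=
            mul_le_mul_of_nonneg_left hpow (exp_pos _).le
        _ = exp (-(-t) * (R*μ - R^α) + (m:ℝ) * ((-t)*μ + C*(-t)^2)) := by
            rw [← Real.exp_nat_mul, ← Real.exp_add]
        _ ≤ exp (-(c' * R^β)) := by
            rw [hmR]
            exact exp_le_exp.2 (by linarith [hEle])
    -- set inclusion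
    have hsub : {ω | |A m ω - R * μ| > R^α}
        ⊆ {ω | R*μ + R^α ≤ (∑ i ∈ Finset.range m, X i) ω}
          ∪ {ω | (∑ i ∈ Finset.range m, X i) ω ≤ R*μ - R^α} := by
      intro ω hω
      simp only [Set.mem_setOf_eq, gt_iff_lt] at hω
      rw [hA m ω] at hω
      simp only [Set.mem_union, Set.mem_setOf_eq, Finset.sum_apply]
      rcases lt_abs.1 hω with h | h
      · left; linarith
      · right; linarith
    calc P {ω | |A m ω - R * μ| > R^α}
        ≤ P ({ω | R*μ + R^α ≤ (∑ i ∈ Finset.range m, X i) ω}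
          ∪ {ω | (∑ i ∈ Finset.range m, X i) ω ≤ R*μ - R^α}) := measure_mono hsub
      _ ≤ P {ω | R*μ + R^α ≤ (∑ i ∈ Finset.range m, X i) ω}
          + P {ω | (∑ i ∈ Finset.range m, X i) ω ≤ R*μ - R^α} := measure_union_le _ _
      _ ≤ ENNReal.ofReal (exp (-(c' * R^β))) + ENNReal.ofReal (exp (-(c' * R^β))) := by
          gcongr
          · rw [← ENNReal.ofReal_toReal (measure_ne_top P _)]
            exact ENNReal.ofReal_le_ofReal hub2
          · rw [← ENNReal.ofReal_toReal (measure_ne_top P _)]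
            exact ENNReal.ofReal_le_ofReal hlb2
      _ = ENNReal.ofReal (2 * exp (-(c' * R^β))) := by
          rw [← ENNReal.ofReal_add (exp_pos _).le (exp_pos _).le]
          ring_nf
  calc ∑' n : ℕ, P {ω | |A (n+1) ω - ((n:ℝ)+1) * μ| > ((n:ℝ)+1)^α}
      ≤ ∑' n : ℕ, ENNReal.ofReal (2 * exp (-(c' * ((n:ℝ)+1)^β))) := ENNReal.tsum_le_tsum hkey
    _ = ENNReal.ofReal (∑' n : ℕ, 2 * exp (-(c' * ((n:ℝ)+1)^β))) :=
        (ENNReal.ofReal_tsum_of_nonneg (fun n => by positivity)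
          ((aux_summable_s15 hc' hβ).mul_left 2)).symm
    _ < ⊤ := ENNReal.ofReal_lt_top
end
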